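/- Let (g, [·,·], α) be a multiplicative Hom-Lie algebra and D, D′, …, D^{(n−1)} endomorphisms of g such that D^{(i)} is an α^k-quasiderivation with associated endomorphism D^{(i+1)} (i.e., [D^{(i)}(x), α^k(y)] + [α^k(x), D^{(i)}(y)] = D^{(i+1)}([x,y])) for 0 ≤ i ≤ n−2, where D^{(0)} = D. Then the (n+1)-tuple (D, D, D′, …, D^{(n−1)}) is an (n+1)-ary α^k-derivation of the induced n-bracket [x₁,…,x_n]_n: D^{(n−1)}([x₁,…,x_n]_n) = [D(x₁),α^k(x₂),…,α^k(x_n)]_n + [α^k(x₁),D(x₂),α^k(x₃),…,α^k(x_n)]_n + ∑_{i=3}^n [α^k(x₁),…,D^{(i−2)}(x_i),…,α^k(x_n)]_n. -/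
import Mathlib


/-- The iterated n-ary bracket (n = m+2):
[x₁,…,x_n]_n = [[x₁,…,x_{n−1}]_{n−1}, α^{n−2}(x_n)], with [x₁,x₂]₂ = [x₁,x₂]. -/
noncomputable def iterBracket {K g : Type*} [Field K] [AddCommGroup g] [Module K g]
    (b : g →ₗ[K] g →ₗ[K] g) (α : g → g) : (m : ℕ) → (Fin (m + 2) → g) → g
  | 0, x => b (x 0) (x 1)
  | m + 1, x =>
      b (iterBracket b α m (fun i => x i.castSucc)) (α^[m + 1] (x (Fin.last (m + 2))))

/-- let (g,[·,·],α) be a multiplicative Hom-Lie algebra and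
D = D⁽⁰⁾, D′ = D⁽¹⁾, …, D^{(n−1)} endomorphisms (n = m+2) such that each D⁽ⁱ⁾,
0 ≤ i ≤ n−2, is an α^k-quasiderivation with associated endomorphism D⁽ⁱ⁺¹⁾.
Then (D,D,D′,…,D^{(n−1)}) is an (n+1)-ary α^k-derivation of the induced
n-bracket: D^{(n−1)}([x₁,…,x_n]_n) equals the sum where positions 1 and 2
receive D and position i ≥ 3 receives D^{(i−2)}. -/
theorem iterBracket_quasiderivation_tuple {K g : Type*} [Field K] [CharZero K]
    [AddCommGroup g] [Module K g]
    (b : g →ₗ[K] g →ₗ[K] g) (α : g →ₗ[K] g)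
    (hskew : ∀ x y, b x y = - b y x)
    (hJac : ∀ x y z : g, b (α x) (b y z) + b (α y) (b z x) + b (α z) (b x y) = 0)
    (hmult : ∀ x y, α (b x y) = b (α x) (α y))
    (m k : ℕ) (Ds : ℕ → g →ₗ[K] g)
    (hq : ∀ i ≤ m, ∀ x y : g,
      b (Ds i x) ((⇑α)^[k] y) + b ((⇑α)^[k] x) (Ds i y) = Ds (i + 1) (b x y))
    (hcomm : ∀ (i : ℕ) (x : g), Ds i (α x) = α (Ds i x)) :
    ∀ x : Fin (m + 2) → g,
      Ds (m + 1) (iterBracket b (⇑α) m x) =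
        ∑ j : Fin (m + 2),
          iterBracket b (⇑α) m
            (Function.update (fun t => (⇑α)^[k] (x t)) j
              (Ds (if j.val ≤ 1 then 0 else j.val - 1) (x j))) := by
  have hmultIt : ∀ (n : ℕ) (x y : g), (⇑α)^[n] (b x y) = b ((⇑α)^[n] x) ((⇑α)^[n] y) := by
    intro n
    induction n with
    | zero => intro x y; simp
    | succ n ih =>
      intro x y
      rw [Function.iterate_succ_apply' (⇑α) n (b x y), ih, hmult,
        Function.iterate_succ_apply' (⇑α) n x, Function.iterate_succ_apply' (⇑α) n y]
  have hcommIt : ∀ (i n : ℕ) (x : g), Ds i ((⇑α)^[n] x) = (⇑α)^[n] (Ds i x) := by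
    intro i n
    induction n with
    | zero => intro x; simp
    | succ n ih =>
      intro x
      rw [Function.iterate_succ_apply' (⇑α) n x, hcomm, ih,
        Function.iterate_succ_apply' (⇑α) n (Ds i x)]
  have hswap : ∀ (n : ℕ) (z : g), (⇑α)^[k] ((⇑α)^[n] z) = (⇑α)^[n] ((⇑α)^[k] z) := by
    intro n z
    rw [← Function.iterate_add_apply, Nat.add_comm, Function.iterate_add_apply]
  have hbr : ∀ (m' : ℕ) (x : Fin (m' + 2) → g),
      (⇑α)^[k] (iterBracket b (⇑α) m' x) = iterBracket b (⇑α) m' (fun t => (⇑α)^[k] (x t)) := by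
    intro m'
    induction m' with
    | zero => intro x; simpa [iterBracket] using hmultIt k (x 0) (x 1)
    | succ m' ih =>
      intro x
      show (⇑α)^[k] (b (iterBracket b (⇑α) m' (fun i => x i.castSucc))
          ((⇑α)^[m' + 1] (x (Fin.last (m' + 2))))) = _
      rw [hmultIt, ih, hswap]
      rfl
  revert hq
  induction m with
  | zero =>
    intro hq x
    have h := hq 0 (le_refl 0) (x 0) (x 1)
    show Ds 1 (b (x 0) (x 1)) = _
    rw [Fin.sum_univ_two]
    show _ = b _ _ + b _ _
    rw [← h]
    congr 1 <;> simp [Function.update_apply, Fin.ext_iff]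
  | succ m ih =>
    intro hq x
    have ih' := ih (fun i hi => hq i (Nat.le_succ_of_le hi)) (fun i => x i.castSucc)
    show Ds (m + 2) (b (iterBracket b (⇑α) m (fun i => x i.castSucc))
        ((⇑α)^[m + 1] (x (Fin.last (m + 2))))) = _
    rw [← hq (m + 1) (le_refl _), Fin.sum_univ_castSucc, ih']
    congr 1
    · rw [map_sum, LinearMap.sum_apply]
      refine Finset.sum_congr rfl fun j _ => ?_
      show _ = b (iterBracket b (⇑α) m fun i =>
          (Function.update (fun t => (⇑α)^[k] (x t)) j.castSucc
            (Ds (if (j.castSucc : Fin (m + 3)).val ≤ 1 then 0 else (j.castSucc : Fin (m + 3)).val - 1)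
              (x j.castSucc))) i.castSucc)
        ((⇑α)^[m + 1] ((Function.update (fun t => (⇑α)^[k] (x t)) j.castSucc
            (Ds (if (j.castSucc : Fin (m + 3)).val ≤ 1 then 0 else (j.castSucc : Fin (m + 3)).val - 1)
              (x j.castSucc))) (Fin.last (m + 2))))
      rw [Function.update_of_ne (Fin.castSucc_lt_last j).ne', hswap]
      have hfun : (fun i : Fin (m + 2) =>
          (Function.update (fun t : Fin (m + 3) => (⇑α)^[k] (x t)) j.castSucc
            (Ds (if (j.castSucc : Fin (m + 3)).val ≤ 1 then 0 else (j.castSucc : Fin (m + 3)).val - 1)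
              (x j.castSucc))) i.castSucc)
          = Function.update (fun t : Fin (m + 2) => (⇑α)^[k] (x t.castSucc)) j
            (Ds (if j.val ≤ 1 then 0 else j.val - 1) (x j.castSucc)) := by
        funext i
        simp [Function.update_apply, Fin.castSucc_inj, Fin.coe_castSucc]
      rw [hfun]
    · show b _ _ = b (iterBracket b (⇑α) m fun i =>
          (Function.update (fun t => (⇑α)^[k] (x t)) (Fin.last (m + 2))
            (Ds (if (Fin.last (m + 2)).val ≤ 1 then 0 else (Fin.last (m + 2)).val - 1)
              (x (Fin.last (m + 2))))) i.castSucc)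
        ((⇑α)^[m + 1] ((Function.update (fun t => (⇑α)^[k] (x t)) (Fin.last (m + 2))
            (Ds (if (Fin.last (m + 2)).val ≤ 1 then 0 else (Fin.last (m + 2)).val - 1)
              (x (Fin.last (m + 2))))) (Fin.last (m + 2))))
      rw [Function.update_self]
      have hfun : (fun i : Fin (m + 2) =>
          (Function.update (fun t : Fin (m + 3) => (⇑α)^[k] (x t)) (Fin.last (m + 2))
            (Ds (if (Fin.last (m + 2)).val ≤ 1 then 0 else (Fin.last (m + 2)).val - 1)
              (x (Fin.last (m + 2))))) i.castSucc)
          = fun i : Fin (m + 2) => (⇑α)^[k] (x i.castSucc) := by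
        funext i
        rw [Function.update_of_ne (Fin.castSucc_lt_last i).ne]
      rw [hfun, ← hbr m (fun i => x i.castSucc)]
      congr 1
      have hval : ¬ ((Fin.last (m + 2)).val ≤ 1) := by simp [Fin.val_last]
      rw [if_neg hval]
      have h2 : (Fin.last (m + 2)).val - 1 = m + 1 := by simp [Fin.val_last]
      rw [h2, hcommIt]
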